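/- Let τ₀ > 0 and define r(t) := (cos(2πt/τ₀ − π/2), sin(2πt/τ₀ − π/2)) and R(t) := ∫₀^t r(s) ds. Then for every t ∈ [0, τ₀], Area(R)|₀^t = τ₀ (2πt − τ₀ sin(2πt/τ₀)) / (8π²), and moreover Area(R)|₀^t ≥ t³ / (2π² τ₀). -/

import Mathlib

open MeasureTheory

noncomputable section

/-- The area swept by the planar curve `R = (R₁, R₂)` on `[a, b]`:
`Area(R)|_a^b = ½ ∫_a^b (R₂' R₁ − R₁' R₂)`. -/
def sweptArea (R₁ R₂ : ℝ → ℝ) (a b : ℝ) : ℝ :=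
  (1 / 2) * ∫ s in a..b, (deriv R₂ s * R₁ s - deriv R₁ s * R₂ s)

/-- The excess swept by the planar curve `R = (R₁, R₂)` on `[0, t]`:
`Exc(R)|₀^t = Σ_{ℓ,m} ∫₀^t (∫₀^s |ξ R_ℓ'(ξ)| dξ) |R_m'(s)| ds`. -/
def excess (R₁ R₂ : ℝ → ℝ) (t : ℝ) : ℝ :=
  ∑ l : Fin 2, ∑ m : Fin 2,
    ∫ s in (0:ℝ)..t,
      (∫ ξ in (0:ℝ)..s, |ξ * deriv (![R₁, R₂] l) ξ|) * |deriv (![R₁, R₂] m) s|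

/-!
With `ω = 2π/τ₀` the velocity is `r(s) = (sin ωs, -cos ωs)`, so `R(s) = ((1 - cos ωs)/ω, -sin ωs/ω)`
and, by `sin² + cos² = 1`, the integrand `R₂' R₁ - R₁' R₂` collapses to `(1 - cos ωs)/ω`. Hence
`Area(R)|₀^t = (ωt - sin ωt)/(2ω²)`. The lower bound is the scalar inequality
`x - sin x ≥ x³/(2π³)` on `[0, 2π]` at `x = ωt`: on `[0, π]` it holds because the derivative
`1 - cos x` of `x - sin x` dominates `2x²/π²`, and on `[π, 2π]` because `sin x ≤ 0`.
-/

open Real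

theorem sweptArea_integral {r₁ r₂ : ℝ → ℝ} (h₁ : Continuous r₁) (h₂ : Continuous r₂)
    (c a b : ℝ) :
    sweptArea (fun t => ∫ s in c..t, r₁ s) (fun t => ∫ s in c..t, r₂ s) a b =
      (1 / 2) * ∫ s in a..b, (r₂ s * ∫ u in c..s, r₁ u) - r₁ s * ∫ u in c..s, r₂ u := by
  simp only [sweptArea, h₁.deriv_integral, h₂.deriv_integral]

theorem integral_sin_mul {ω : ℝ} (hω : ω ≠ 0) (t : ℝ) :
    ∫ s in (0:ℝ)..t, sin (ω * s) = (1 - cos (ω * t)) / ω := by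
  rw [eq_div_iff hω, mul_comm, ← smul_eq_mul, intervalIntegral.smul_integral_comp_mul_left,
    integral_sin, mul_zero, cos_zero]

theorem integral_cos_mul {ω : ℝ} (hω : ω ≠ 0) (t : ℝ) :
    ∫ s in (0:ℝ)..t, cos (ω * s) = sin (ω * t) / ω := by
  rw [eq_div_iff hω, mul_comm, ← smul_eq_mul, intervalIntegral.smul_integral_comp_mul_left,
    integral_cos, mul_zero, sin_zero, sub_zero]

theorem sweptArea_circle {ω : ℝ} (hω : ω ≠ 0) (t : ℝ) :
    sweptArea (fun t => ∫ s in (0:ℝ)..t, sin (ω * s)) (fun t => ∫ s in (0:ℝ)..t, -cos (ω * s))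
      0 t = (ω * t - sin (ω * t)) / (2 * ω ^ 2) := by
  have hcont : Continuous fun s => cos (ω * s) := by fun_prop
  rw [sweptArea_integral (r₂ := fun s => -cos (ω * s)) (by fun_prop) hcont.neg]
  have hintegrand : ∀ s, -cos (ω * s) * (∫ u in (0:ℝ)..s, sin (ω * u)) -
      sin (ω * s) * (∫ u in (0:ℝ)..s, -cos (ω * u)) = (1 - cos (ω * s)) / ω := by
    intro s
    rw [integral_sin_mul hω, intervalIntegral.integral_neg, integral_cos_mul hω]
    field_simp
    linear_combination sin_sq_add_cos_sq (ω * s)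
  simp only [hintegrand]
  rw [intervalIntegral.integral_div, intervalIntegral.integral_sub intervalIntegrable_const
    (hcont.intervalIntegrable 0 t), integral_cos_mul hω, intervalIntegral.integral_const]
  field_simp
  ring

theorem two_div_mul_cube_le_sub_sin {x : ℝ} (hx₀ : 0 ≤ x) (hxπ : x ≤ π) :
    2 / (3 * π ^ 2) * x ^ 3 ≤ x - sin x := by
  let g : ℝ → ℝ := fun x => x - sin x - 2 / (3 * π ^ 2) * x ^ 3
  have hg (y : ℝ) : HasDerivAt g (1 - cos y - 2 / π ^ 2 * y ^ 2) y :=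
    (((hasDerivAt_id' y).sub (hasDerivAt_sin y)).sub
      ((hasDerivAt_pow 3 y).const_mul (2 / (3 * π ^ 2)))).congr_deriv (by field_simp; ring)
  have hmono : MonotoneOn g (Set.Icc 0 π) := by
    refine monotoneOn_of_deriv_nonneg (convex_Icc 0 π) (by fun_prop : Continuous g).continuousOn
      (fun y _ => (hg y).differentiableAt.differentiableWithinAt) fun y hy => ?_
    rw [interior_Icc] at hy
    rw [(hg y).deriv, sub_nonneg, le_sub_comm]
    exact cos_le_one_sub_mul_cos_sq (by rw [abs_of_pos hy.1]; exact hy.2.le)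
  have := hmono ⟨le_rfl, pi_pos.le⟩ ⟨hx₀, hxπ⟩ hx₀
  simp only [g, sin_zero] at this
  linarith

theorem cube_div_le_sub_sin {x : ℝ} (hx₀ : 0 ≤ x) (hx : x ≤ 2 * π) :
    x ^ 3 / (2 * π ^ 3) ≤ x - sin x := by
  have hπ := pi_gt_three
  rcases le_total x π with hxπ | hπx
  · calc x ^ 3 / (2 * π ^ 3) ≤ 2 / (3 * π ^ 2) * x ^ 3 := by
          field_simp
          nlinarith [pow_nonneg hx₀ 3]
      _ ≤ x - sin x := two_div_mul_cube_le_sub_sin hx₀ hxπ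
  · have hsin : sin x ≤ 0 := by
      rw [← sin_sub_two_pi]
      exact sin_nonpos_of_nonpos_of_neg_pi_le (by linarith) (by linarith)
    have hx3 : x ^ 3 / (2 * π ^ 3) ≤ x := by
      rw [div_le_iff₀ (by positivity)]
      have hx2 : x ^ 2 ≤ 2 * π ^ 3 := by
        nlinarith [mul_le_mul hx hx hx₀ (by positivity), sq_nonneg π]
      nlinarith [mul_le_mul_of_nonneg_left hx2 hx₀]
    linarith

theorem sweptArea_circle_drop {τ₀ : ℝ} (hτ₀ : 0 < τ₀) (t : ℝ) :
    sweptArea (fun t => ∫ s in (0:ℝ)..t, cos (2 * π * s / τ₀ - π / 2))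
        (fun t => ∫ s in (0:ℝ)..t, sin (2 * π * s / τ₀ - π / 2)) 0 t
      = τ₀ * (2 * π * t - τ₀ * sin (2 * π * t / τ₀)) / (8 * π ^ 2) := by
  simp only [cos_sub_pi_div_two, sin_sub_pi_div_two, mul_div_right_comm (2 * π)]
  rw [sweptArea_circle (by positivity)]
  field_simp
  ring

/-- **Area swept by the circle-like drop generator.** For
`r(t) = (cos(2πt/τ₀ − π/2), sin(2πt/τ₀ − π/2))` and `R(t) = ∫₀^t r(s) ds`, one has, for
every `t ∈ [0, τ₀]`, `Area(R)|₀^t = τ₀(2πt − τ₀ sin(2πt/τ₀))/(8π²)` and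
`Area(R)|₀^t ≥ t³/(2π²τ₀)`. -/
theorem circle_drop_area (τ₀ : ℝ) (hτ₀ : 0 < τ₀) :
    ∀ t ∈ Set.Icc (0:ℝ) τ₀,
      sweptArea (fun t => ∫ s in (0:ℝ)..t, Real.cos (2 * Real.pi * s / τ₀ - Real.pi / 2))
          (fun t => ∫ s in (0:ℝ)..t, Real.sin (2 * Real.pi * s / τ₀ - Real.pi / 2)) 0 t
        = τ₀ * (2 * Real.pi * t - τ₀ * Real.sin (2 * Real.pi * t / τ₀)) / (8 * Real.pi ^ 2) ∧
      t ^ 3 / (2 * Real.pi ^ 2 * τ₀) ≤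
        sweptArea (fun t => ∫ s in (0:ℝ)..t, Real.cos (2 * Real.pi * s / τ₀ - Real.pi / 2))
          (fun t => ∫ s in (0:ℝ)..t, Real.sin (2 * Real.pi * s / τ₀ - Real.pi / 2)) 0 t := by
  rintro t ⟨ht₀, htτ⟩
  rw [sweptArea_circle_drop hτ₀]
  refine ⟨rfl, ?_⟩
  have hx : 2 * π * t / τ₀ ≤ 2 * π := by
    rw [div_le_iff₀ hτ₀]
    nlinarith [pi_pos]
  calc t ^ 3 / (2 * π ^ 2 * τ₀)
      = τ₀ ^ 2 / (8 * π ^ 2) * ((2 * π * t / τ₀) ^ 3 / (2 * π ^ 3)) := by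
        field_simp
        ring
    _ ≤ τ₀ ^ 2 / (8 * π ^ 2) * (2 * π * t / τ₀ - sin (2 * π * t / τ₀)) := by
        gcongr
        exact cube_div_le_sub_sin (by positivity) hx
    _ = τ₀ * (2 * π * t - τ₀ * sin (2 * π * t / τ₀)) / (8 * π ^ 2) := by
        field_simp

end
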